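/- arXiv:2310.02483 — 3 statements merged into one kernel-verified Lean document; each statement's English description precedes it below -/
import Mathlib

section
/- For every integer n ≥ 1, the identity ∑_{q=0}^{n} q · 2^q · C(2n−q, q) = (2/27)·((6n−1)·4^n + 6n + 1) holds; equivalently, 27·∑_{q=0}^{n} q · 2^q · C(2n−q, q) = 2·((6n−1)·4^n + 6n + 1). -/
/-!
Write `S_a(m) = ∑_{i+j=m} a(i) C(j, i)` for the shallow diagonals of Pascal's triangle weighted by
`a`. Pascal's rule gives `S_a(m+2) = S_a(m+1) + S_{a(·+1)}(m)`. For `a(q) = x^q` this is the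
recurrence `F(m+2) = F(m+1) + x F(m)`, and for `a(q) = q x^q` it is
`G(m+2) = G(m+1) + x G(m) + x F(m)`. At `x = 2` the characteristic roots are `2` and `-1`, so
`3 F(m) = 2^(m+1) + (-1)^m` and `27 G(m) = 2((3m-1) 2^m + (3m+1)(-1)^m)`, by induction. The sum in
the theorem is `G(2n)`.
-/

open Finset

variable {R : Type*} [CommSemiring R]

def shallowDiagonalSum (a : ℕ → R) (m : ℕ) : R :=
  ∑ p ∈ antidiagonal m, a p.1 * p.2.choose p.1

theorem shallowDiagonalSum_add_two (a : ℕ → R) (m : ℕ) :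
    shallowDiagonalSum a (m + 2) =
      shallowDiagonalSum a (m + 1) + shallowDiagonalSum (fun q ↦ a (q + 1)) m := by
  simp only [shallowDiagonalSum]
  rw [Nat.sum_antidiagonal_succ, Nat.sum_antidiagonal_succ', Nat.sum_antidiagonal_succ (n := m)]
  simp only [Nat.choose_succ_succ, Nat.choose_zero_succ, Nat.choose_zero_right, Nat.cast_add,
    mul_add, sum_add_distrib]
  ring

theorem sum_range_eq_shallowDiagonalSum (a : ℕ → R) {k m : ℕ} (hkm : k ≤ m) (hmk : m ≤ 2 * k) :
    ∑ q ∈ range (k + 1), a q * (m - q).choose q = shallowDiagonalSum a m := by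
  rw [shallowDiagonalSum, Nat.sum_antidiagonal_eq_sum_range_succ (fun i j ↦ a i * j.choose i)]
  refine sum_subset (range_subset_range.2 (by omega)) fun q hq hqk ↦ ?_
  simp only [mem_range] at hq hqk
  rw [Nat.choose_eq_zero_of_lt (by omega), Nat.cast_zero, mul_zero]

theorem shallowDiagonalSum_pow_add_two (x : R) (m : ℕ) :
    shallowDiagonalSum (x ^ ·) (m + 2) =
      shallowDiagonalSum (x ^ ·) (m + 1) + x * shallowDiagonalSum (x ^ ·) m := by
  rw [shallowDiagonalSum_add_two]
  simp only [shallowDiagonalSum, mul_sum, pow_succ', mul_assoc]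

theorem shallowDiagonalSum_mul_pow_add_two (x : R) (m : ℕ) :
    shallowDiagonalSum (fun q ↦ q * x ^ q) (m + 2) =
      shallowDiagonalSum (fun q ↦ q * x ^ q) (m + 1) +
        x * shallowDiagonalSum (fun q ↦ q * x ^ q) m + x * shallowDiagonalSum (x ^ ·) m := by
  rw [shallowDiagonalSum_add_two, add_assoc]
  simp only [shallowDiagonalSum, mul_sum, ← sum_add_distrib]
  congr 1
  refine sum_congr rfl fun p _ ↦ ?_
  push_cast
  ring

theorem shallowDiagonalSum_two_pow (m : ℕ) :
    3 * shallowDiagonalSum ((2 : ℤ) ^ ·) m = 2 ^ (m + 1) + (-1) ^ m := by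
  induction m using Nat.twoStepInduction with
  | zero => decide
  | one => decide
  | more m ih₀ ih₁ =>
    rw [shallowDiagonalSum_pow_add_two, mul_add, mul_left_comm, ih₀, ih₁]
    ring

theorem shallowDiagonalSum_mul_two_pow (m : ℕ) :
    27 * shallowDiagonalSum (fun q ↦ (q : ℤ) * 2 ^ q) m =
      2 * ((3 * m - 1) * 2 ^ m + (3 * m + 1) * (-1) ^ m) := by
  induction m using Nat.twoStepInduction with
  | zero => decide
  | one => decide
  | more m ih₀ ih₁ =>
    rw [shallowDiagonalSum_mul_pow_add_two]
    push_cast at ih₁ ⊢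
    linear_combination ih₁ + 2 * ih₀ + 18 * shallowDiagonalSum_two_pow m

theorem sum_mul_two_pow_mul_choose'_general (n : ℕ) :
    27 * ∑ q ∈ Finset.range (n + 1), (q : ℤ) * 2 ^ q * (Nat.choose (2 * n - q) q : ℤ)
      = 2 * ((6 * (n : ℤ) - 1) * 4 ^ n + 6 * (n : ℤ) + 1) := by
  rw [sum_range_eq_shallowDiagonalSum (fun q ↦ (q : ℤ) * 2 ^ q) (by omega) le_rfl,
    shallowDiagonalSum_mul_two_pow, pow_mul, pow_mul]
  push_cast
  ring

/-- Lemma 2.3 (second identity): for every `n ≥ 1`,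
`27 * ∑_{q=0}^{n} q * 2^q * C(2n-q, q) = 2 * ((6n-1) * 4^n + 6n + 1)`. -/
theorem sum_mul_two_pow_mul_choose' (n : ℕ) (hn : 1 ≤ n) :
    27 * ∑ q ∈ Finset.range (n + 1), (q : ℤ) * 2 ^ q * (Nat.choose (2 * n - q) q : ℤ)
      = 2 * ((6 * (n : ℤ) - 1) * 4 ^ n + 6 * (n : ℤ) + 1) :=
  sum_mul_two_pow_mul_choose'_general n
end

section
/- For every integer n ≥ 0, setting k = 2n+1 and c = 4n+3, one has (2k−1)/2 + (1/2)·∑_{l=0}^{k-1} (2l+1)·2^{k−l−1}·C(k+l, 2l+1) + ∑_{p=0}^{n} (4p+1)·2^{n−p}·C(n+p, 2p) = (1/27)·((3c−4)·2^{c−2} + (3c+4)·2^{(c−1)/2} + 12c − 18). (The left-hand side is the total number of sign changes, summed over all two-bridge knots with crossing number c ≡ 3 (mod 4).) -/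
/-!
With a weight `w`, `∑ C(n+p, 2p) w p` and `∑ C(n+1+p, 2p+1) w p` are weighted Morgan–Voyce
polynomials `b_n`, `B_n`. Pascal's rule gives the coupled recurrences
`b_{n+1} w = b_n w + B_n (w ∘ succ)` and `B_{n+1} w = b_{n+1} w + B_n w`.
The weights `(a p + b) / 2^p` form a family closed under `w ↦ w ∘ succ`, so one induction on `n`,
generalizing `a` and `b`, gives closed forms in `2^n` and `4^n`. Pulling `2^n` out of `2^(n-p)`
turns both sums of the theorem into such values, and the identity becomes algebra in `2^n`.
-/

open Finset

section ChooseSums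

variable {R : Type*} [Semiring R]

def evenChooseSum (n : ℕ) (w : ℕ → R) : R :=
  ∑ p ∈ range (n + 1), ((n + p).choose (2 * p) : R) * w p

def oddChooseSum (n : ℕ) (w : ℕ → R) : R :=
  ∑ p ∈ range (n + 1), ((n + 1 + p).choose (2 * p + 1) : R) * w p

lemma evenChooseSum_succ (n : ℕ) (w : ℕ → R) :
    evenChooseSum (n + 1) w = evenChooseSum n w + oddChooseSum n (fun p => w (p + 1)) := by
  have hsucc : evenChooseSum (n + 1) w =
      ∑ q ∈ range (n + 1), ((n + 1 + (q + 1)).choose (2 * (q + 1)) : R) * w (q + 1) + w 0 := by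
    rw [evenChooseSum, sum_range_succ']
    simp
  have hself : evenChooseSum n w =
      ∑ q ∈ range (n + 1), ((n + (q + 1)).choose (2 * (q + 1)) : R) * w (q + 1) + w 0 := by
    calc evenChooseSum n w = ∑ p ∈ range (n + 1 + 1), ((n + p).choose (2 * p) : R) * w p := by
          rw [sum_range_succ (fun p => ((n + p).choose (2 * p) : R) * w p) (n + 1),
            Nat.choose_eq_zero_of_lt (by omega), Nat.cast_zero, zero_mul, add_zero, evenChooseSum]
      _ = _ := by
          rw [sum_range_succ']
          simp
  rw [hsucc, hself, oddChooseSum, add_right_comm, ← sum_add_distrib]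
  congr 1
  refine sum_congr rfl fun q _ => ?_
  rw [show n + 1 + (q + 1) = n + 1 + q + 1 by omega, show 2 * (q + 1) = 2 * q + 1 + 1 by omega,
    Nat.choose_succ_succ', show n + (q + 1) = n + 1 + q by omega, Nat.cast_add, add_mul, add_comm]

lemma oddChooseSum_succ (n : ℕ) (w : ℕ → R) :
    oddChooseSum (n + 1) w = evenChooseSum (n + 1) w + oddChooseSum n w := by
  have hpascal : ∀ p, ((n + 1 + 1 + p).choose (2 * p + 1) : R) * w p =
      ((n + 1 + p).choose (2 * p) : R) * w p + ((n + 1 + p).choose (2 * p + 1) : R) * w p := by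
    intro p
    rw [show n + 1 + 1 + p = n + 1 + p + 1 by omega, Nat.choose_succ_succ', Nat.cast_add, add_mul]
  rw [oddChooseSum, sum_congr rfl fun p _ => hpascal p, sum_add_distrib, evenChooseSum,
    sum_range_succ (fun p => ((n + 1 + p).choose (2 * p + 1) : R) * w p),
    Nat.choose_eq_zero_of_lt (by omega), Nat.cast_zero, zero_mul, add_zero, oddChooseSum]

end ChooseSums

section ClosedForms

variable {K : Type*} [Field K] [CharZero K]

lemma affine_div_two_pow_shift (a b : K) :
    (fun p : ℕ => (a * (p + 1 : ℕ) + b) / 2 ^ (p + 1)) =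
      fun p : ℕ => (a / 2 * p + (a + b) / 2) / 2 ^ p := by
  funext p
  push_cast
  field_simp
  ring

theorem evenChooseSum_oddChooseSum_affine_div_two_pow (n : ℕ) (a b : K) :
    evenChooseSum n (fun p => (a * p + b) / 2 ^ p) =
        (a * ((6 * n + 2) * 4 ^ n - 3 * n - 2) + 9 * b * (2 * 4 ^ n + 1)) / (27 * 2 ^ n) ∧
      oddChooseSum n (fun p => (a * p + b) / 2 ^ p) =
        (a * ((12 * n - 8) * 4 ^ n + 3 * n + 8) + 9 * b * (4 * 4 ^ n - 1)) / (27 * 2 ^ n) := by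
  induction n generalizing a b with
  | zero =>
    constructor <;> norm_num [evenChooseSum, oddChooseSum] <;> ring
  | succ n ih =>
    have heven : evenChooseSum (n + 1) (fun p => (a * p + b) / 2 ^ p) =
        (a * ((6 * (n + 1 : ℕ) + 2) * 4 ^ (n + 1) - 3 * (n + 1 : ℕ) - 2)
          + 9 * b * (2 * 4 ^ (n + 1) + 1)) / (27 * 2 ^ (n + 1)) := by
      rw [evenChooseSum_succ, affine_div_two_pow_shift, (ih a b).1, (ih _ _).2]
      push_cast
      field_simp
      ring
    refine ⟨heven, ?_⟩
    rw [oddChooseSum_succ, heven, (ih a b).2]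
    push_cast
    field_simp
    ring

end ClosedForms

lemma sum_mul_pow_sub_mul {K : Type*} [Field K] {x : K} (hx : x ≠ 0) (n : ℕ) (f g : ℕ → K) :
    ∑ p ∈ range (n + 1), f p * x ^ (n - p) * g p =
      x ^ n * ∑ p ∈ range (n + 1), g p * (f p / x ^ p) := by
  rw [mul_sum]
  refine sum_congr rfl fun p hp => ?_
  rw [pow_sub₀ x hx (Nat.lt_succ_iff.mp (mem_range.mp hp))]
  field_simp

/-- Total "sign change" for crossing number `c ≡ 3 (mod 4)`: for every `n ≥ 0`,
with `k = 2n+1` and `c = 4n+3`,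
`(2k-1)/2 + (1/2) * ∑_{l=0}^{k-1} (2l+1) * 2^(k-l-1) * C(k+l, 2l+1)
  + ∑_{p=0}^{n} (4p+1) * 2^(n-p) * C(n+p, 2p)
  = (1/27) * ((3c-4) * 2^(c-2) + (3c+4) * 2^((c-1)/2) + 12c - 18)`. -/
theorem total_sign_change_three_mod_four (n k c : ℕ)
    (hk : k = 2 * n + 1) (hc : c = 4 * n + 3) :
    (2 * (k : ℚ) - 1) / 2
      + (1 / 2) * ∑ l ∈ Finset.range k,
          (2 * (l : ℚ) + 1) * 2 ^ (k - l - 1) * (Nat.choose (k + l) (2 * l + 1) : ℚ)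
      + ∑ p ∈ Finset.range (n + 1),
          (4 * (p : ℚ) + 1) * 2 ^ (n - p) * (Nat.choose (n + p) (2 * p) : ℚ)
    = (1 / 27) * ((3 * (c : ℚ) - 4) * 2 ^ (c - 2)
        + (3 * (c : ℚ) + 4) * 2 ^ ((c - 1) / 2) + 12 * (c : ℚ) - 18) := by
  subst hk hc
  simp only [Nat.sub_right_comm _ _ 1, Nat.add_sub_cancel]
  rw [sum_mul_pow_sub_mul two_ne_zero, sum_mul_pow_sub_mul two_ne_zero, ← oddChooseSum,
    ← evenChooseSum, (evenChooseSum_oddChooseSum_affine_div_two_pow (2 * n) 2 1).2,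
    (evenChooseSum_oddChooseSum_affine_div_two_pow n 4 1).1,
    show 4 * n + 3 - 2 = 4 * n + 1 by omega, show (4 * n + 3 - 1) / 2 = 2 * n + 1 by omega,
    show (4 : ℚ) = 2 ^ 2 by norm_num, ← pow_mul, ← pow_mul]
  push_cast
  field_simp
  ring
end

section
/- Let m ≥ 1 and let a = (a_1, …, a_{2m}) be a sequence of nonzero integers. Then B(a) = 4 if and only if one of the following holds: (type 4a) there exists i_0 with |a_{i_0}| = 3, |a_i| = 1 for all i ≠ i_0, and a_i · a_{i+1} < 0 for all 1 ≤ i ≤ 2m−1; (type 4b) there exist i_0 ≠ i_1 with |a_{i_0}| = |a_{i_1}| = 2, |a_i| = 1 for all i ≠ i_0, i_1, and a_i · a_{i+1} < 0 for all 1 ≤ i ≤ 2m−1; (type 4c) there exist i_0 and i_1 (possibly equal) with |a_{i_0}| = 2, |a_i| = 1 for all i ≠ i_0, a_{i_1} · a_{i_1+1} > 0, and a_i · a_{i+1} < 0 for all i ≠ i_1, 1 ≤ i ≤ 2m−1; or (type 4d) |a_i| = 1 for all i and there exist i_0 < i_1 with a_{i_0} · a_{i_0+1} > 0, a_{i_1}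 · a_{i_1+1} > 0, and a_i · a_{i+1} < 0 for all i ≠ i_0, i_1, 1 ≤ i ≤ 2m−1. -/
/-- The number of sign changes of the sequence `a 0, a 1, …, a (N-1)`:
the number of indices `i` with `0 ≤ i ≤ N - 2` and `a i * a (i+1) < 0`. -/
def signChanges (N : ℕ) (a : ℕ → ℤ) : ℕ :=
  ((Finset.range (N - 1)).filter (fun i => a i * a (i + 1) < 0)).card

/-- The braid index `B(a) = (∑ |a i|) - t(a) + 1` of the sequence `a 0, …, a (N-1)`;
for a reduced even continued fraction `(2 a 0, …, 2 a (2m-1))` this is the braid index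
of the corresponding two-bridge knot. -/
def braidB (N : ℕ) (a : ℕ → ℤ) : ℤ :=
  (∑ i ∈ Finset.range N, |a i|) - (signChanges N a : ℤ) + 1

/-!
Write `|a i| = 1 + e i` with `e i ≥ 0`, and let `r` be the number of consecutive pairs of the
same sign. For nonzero entries every pair either changes or repeats its sign, so
`t(a) = (N - 1) - r` and `B(a) = ∑ e i + r + 2`. Hence `B(a) = 4` exactly when the excess `∑ e i`
and `r` add up to `2`: excess `2` without repeats gives types 4a (one entry `3`) and 4b (two
entries `2`), excess `1` with one repeat gives 4c, and no excess with two repeats gives 4d.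
-/

def absExcess (N : ℕ) (a : ℕ → ℤ) : ℕ :=
  ∑ i ∈ Finset.range N, ((a i).natAbs - 1)

def signRepeats (N : ℕ) (a : ℕ → ℤ) : ℕ :=
  ((Finset.range (N - 1)).filter (fun i => 0 < a i * a (i + 1))).card

namespace Finset

variable {ι : Type*} {s : Finset ι} {f : ι → ℕ}

theorem sum_nat_eq_one_iff :
    ∑ i ∈ s, f i = 1 ↔ ∃ i ∈ s, f i = 1 ∧ ∀ j ∈ s, j ≠ i → f j = 0 := by
  classical
  constructor
  · intro h
    obtain ⟨i, hi, hfi⟩ := exists_ne_zero_of_sum_ne_zero (h ▸ one_ne_zero)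
    have hsplit := add_sum_erase s f hi
    have hrest : ∑ j ∈ s.erase i, f j = 0 := by omega
    exact ⟨i, hi, by omega, fun j hj hji =>
      sum_eq_zero_iff.mp hrest j (mem_erase.mpr ⟨hji, hj⟩)⟩
  · rintro ⟨i, hi, hfi, hrest⟩
    rw [sum_eq_single_of_mem i hi hrest, hfi]

theorem sum_nat_eq_two_iff :
    ∑ i ∈ s, f i = 2 ↔ (∃ i ∈ s, f i = 2 ∧ ∀ j ∈ s, j ≠ i → f j = 0) ∨
      ∃ i ∈ s, ∃ j ∈ s, i ≠ j ∧ f i = 1 ∧ f j = 1 ∧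
        ∀ k ∈ s, k ≠ i → k ≠ j → f k = 0 := by
  classical
  constructor
  · intro h
    obtain ⟨i, hi, hfi⟩ := exists_ne_zero_of_sum_ne_zero (h ▸ two_ne_zero)
    have hsplit := add_sum_erase s f hi
    obtain hfi2 | hfi1 : f i = 2 ∨ f i = 1 := by omega
    · have hrest : ∑ j ∈ s.erase i, f j = 0 := by omega
      exact .inl ⟨i, hi, hfi2, fun j hj hji =>
        sum_eq_zero_iff.mp hrest j (mem_erase.mpr ⟨hji, hj⟩)⟩
    · have hrest : ∑ j ∈ s.erase i, f j = 1 := by omega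
      obtain ⟨j, hj, hfj, hzero⟩ := sum_nat_eq_one_iff.mp hrest
      obtain ⟨hji, hjs⟩ := mem_erase.mp hj
      exact .inr ⟨i, hi, j, hjs, hji.symm, hfi1, hfj, fun k hk hki =>
        hzero k (mem_erase.mpr ⟨hki, hk⟩)⟩
  · rintro (⟨i, hi, hfi, hrest⟩ | ⟨i, hi, j, hj, hij, hfi, hfj, hrest⟩)
    · rw [sum_eq_single_of_mem i hi hrest, hfi]
    · rw [sum_eq_add_of_mem i j hi hj hij fun k hk hk' => hrest k hk hk'.1 hk'.2, hfi, hfj]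

end Finset

namespace Int

variable {x : ℤ} {k : ℕ}

theorem natAbs_sub_one_eq_iff (hx : x ≠ 0) : x.natAbs - 1 = k ↔ |x| = k + 1 := by
  have := natAbs_pos.mpr hx
  rw [abs_eq_natAbs]
  omega

theorem natAbs_sub_one_eq_iff_of_ne_zero (hk : k ≠ 0) : x.natAbs - 1 = k ↔ |x| = k + 1 := by
  rw [abs_eq_natAbs]
  omega

end Int

section

variable {N : ℕ} {a : ℕ → ℤ}

theorem sum_abs_eq_absExcess_add (ha : ∀ i < N, a i ≠ 0) :
    ∑ i ∈ Finset.range N, |a i| = absExcess N a + N := by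
  have hterm : ∀ i ∈ Finset.range N, |a i| = ((a i).natAbs - 1 : ℕ) + 1 := fun i hi =>
    (Int.natAbs_sub_one_eq_iff (ha i (Finset.mem_range.mp hi))).mp rfl
  rw [Finset.sum_congr rfl hterm, Finset.sum_add_distrib, absExcess]
  simp

theorem absExcess_eq_zero_iff (ha : ∀ i < N, a i ≠ 0) :
    absExcess N a = 0 ↔ ∀ i < N, |a i| = 1 := by
  simp +contextual only [absExcess, Finset.sum_eq_zero_iff, Finset.mem_range,
    Int.natAbs_sub_one_eq_iff, ha, ne_eq, not_false_eq_true, Nat.cast_zero, zero_add]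

theorem absExcess_eq_one_iff (ha : ∀ i < N, a i ≠ 0) :
    absExcess N a = 1 ↔ ∃ i₀ < N, |a i₀| = 2 ∧ ∀ i < N, i ≠ i₀ → |a i| = 1 := by
  simp +contextual only [absExcess, Finset.sum_nat_eq_one_iff, Finset.mem_range,
    Int.natAbs_sub_one_eq_iff, ha, ne_eq, not_false_eq_true, Nat.cast_zero, zero_add,
    Int.natAbs_sub_one_eq_iff_of_ne_zero, one_ne_zero]
  norm_num

theorem absExcess_eq_two_iff (ha : ∀ i < N, a i ≠ 0) :
    absExcess N a = 2 ↔
      (∃ i₀ < N, |a i₀| = 3 ∧ ∀ i < N, i ≠ i₀ → |a i| = 1) ∨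
      ∃ i₀ < N, ∃ i₁ < N, i₀ ≠ i₁ ∧ |a i₀| = 2 ∧ |a i₁| = 2 ∧
        ∀ i < N, i ≠ i₀ → i ≠ i₁ → |a i| = 1 := by
  simp +contextual only [absExcess, Finset.sum_nat_eq_two_iff, Finset.mem_range,
    Int.natAbs_sub_one_eq_iff, ha, ne_eq, not_false_eq_true, Nat.cast_zero, zero_add,
    Int.natAbs_sub_one_eq_iff_of_ne_zero, one_ne_zero, two_ne_zero]
  norm_num

theorem not_pos_mul_succ_iff_neg (ha : ∀ i < N, a i ≠ 0) {i : ℕ} (hi : i < N - 1) :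
    ¬ 0 < a i * a (i + 1) ↔ a i * a (i + 1) < 0 :=
  not_lt.trans (mul_ne_zero (ha i (by omega)) (ha (i + 1) (by omega))).le_iff_lt

theorem signChanges_add_signRepeats (ha : ∀ i < N, a i ≠ 0) :
    signChanges N a + signRepeats N a = N - 1 := by
  have hsign : ∀ i ∈ Finset.range (N - 1), 0 < a i * a (i + 1) ↔ ¬ a i * a (i + 1) < 0 :=
    fun i hi => by rw [← not_pos_mul_succ_iff_neg ha (Finset.mem_range.mp hi), not_not]
  rw [signChanges, signRepeats, Finset.filter_congr hsign,
    Finset.card_filter_add_card_filter_not, Finset.card_range]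

theorem signRepeats_eq_zero_iff (ha : ∀ i < N, a i ≠ 0) :
    signRepeats N a = 0 ↔ ∀ i < N - 1, a i * a (i + 1) < 0 := by
  simp +contextual only [signRepeats, Finset.card_filter, Finset.sum_eq_zero_iff,
    Finset.mem_range, ite_eq_right_iff, one_ne_zero, imp_false, not_pos_mul_succ_iff_neg ha]

theorem signRepeats_eq_one_iff (ha : ∀ i < N, a i ≠ 0) :
    signRepeats N a = 1 ↔ ∃ i₁ < N - 1, 0 < a i₁ * a (i₁ + 1) ∧
      ∀ i < N - 1, i ≠ i₁ → a i * a (i + 1) < 0 := by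
  simp +contextual only [signRepeats, Finset.card_filter, Finset.sum_nat_eq_one_iff,
    Finset.mem_range, ite_eq_right_iff, ite_eq_left_iff, one_ne_zero, zero_ne_one, imp_false,
    not_not, not_pos_mul_succ_iff_neg ha]

theorem signRepeats_eq_two_iff (ha : ∀ i < N, a i ≠ 0) :
    signRepeats N a = 2 ↔ ∃ i₀ i₁, i₀ < i₁ ∧ i₁ < N - 1 ∧
      0 < a i₀ * a (i₀ + 1) ∧ 0 < a i₁ * a (i₁ + 1) ∧
      ∀ i < N - 1, i ≠ i₀ → i ≠ i₁ → a i * a (i + 1) < 0 := by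
  simp +contextual only [signRepeats, Finset.card_filter, Finset.sum_nat_eq_two_iff,
    Finset.mem_range, ite_eq_right_iff, ite_eq_left_iff, one_ne_zero, zero_ne_one, imp_false,
    not_not, not_pos_mul_succ_iff_neg ha]
  simp only [ite_eq_iff, OfNat.one_ne_ofNat, OfNat.zero_ne_ofNat, and_false, or_false,
    false_and, exists_false, false_or]
  constructor
  · rintro ⟨i, hi, j, hj, hij, hpi, hpj, hrest⟩
    rcases hij.lt_or_gt with hlt | hgt
    · exact ⟨i, j, hlt, hj, hpi, hpj, hrest⟩
    · exact ⟨j, i, hgt, hi, hpj, hpi, fun k hk hkj hki => hrest k hk hki hkj⟩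
  · rintro ⟨i, j, hlt, hj, hpi, hpj, hrest⟩
    exact ⟨i, hlt.trans hj, j, hj, hlt.ne, hpi, hpj, hrest⟩

theorem braidB_eq (hN : 0 < N) (ha : ∀ i < N, a i ≠ 0) :
    braidB N a = absExcess N a + signRepeats N a + 2 := by
  have := signChanges_add_signRepeats ha
  rw [braidB, sum_abs_eq_absExcess_add ha]
  omega

theorem braidB_eq_four_iff (hN : 0 < N) (ha : ∀ i < N, a i ≠ 0) :
    braidB N a = 4 ↔ absExcess N a + signRepeats N a = 2 := by
  rw [braidB_eq hN ha]
  omega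

end

/-- Lemma 4.6: a two-bridge knot with reduced even continued fraction
`(2a_1, …, 2a_{2m})` has braid index `4` if and only if it is of type `4a`, `4b`,
`4c`, or `4d`. -/
theorem braid_index_eq_four_iff (m : ℕ) (hm : 1 ≤ m) (a : ℕ → ℤ)
    (ha : ∀ i < 2 * m, a i ≠ 0) :
    braidB (2 * m) a = 4 ↔
      -- type 4a
      (∃ i₀ < 2 * m, |a i₀| = 3 ∧ (∀ i < 2 * m, i ≠ i₀ → |a i| = 1) ∧
        (∀ i < 2 * m - 1, a i * a (i + 1) < 0)) ∨
      -- type 4b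
      (∃ i₀ < 2 * m, ∃ i₁ < 2 * m, i₀ ≠ i₁ ∧ |a i₀| = 2 ∧ |a i₁| = 2 ∧
        (∀ i < 2 * m, i ≠ i₀ → i ≠ i₁ → |a i| = 1) ∧
        (∀ i < 2 * m - 1, a i * a (i + 1) < 0)) ∨
      -- type 4c (possibly i₀ and i₁ refer to the same place)
      (∃ i₀ < 2 * m, ∃ i₁ < 2 * m - 1, |a i₀| = 2 ∧
        (∀ i < 2 * m, i ≠ i₀ → |a i| = 1) ∧ 0 < a i₁ * a (i₁ + 1) ∧
        (∀ i < 2 * m - 1, i ≠ i₁ → a i * a (i + 1) < 0)) ∨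
      -- type 4d
      ((∀ i < 2 * m, |a i| = 1) ∧
        ∃ i₀, ∃ i₁, i₀ < i₁ ∧ i₁ < 2 * m - 1 ∧
          0 < a i₀ * a (i₀ + 1) ∧ 0 < a i₁ * a (i₁ + 1) ∧
          (∀ i < 2 * m - 1, i ≠ i₀ → i ≠ i₁ → a i * a (i + 1) < 0)) := by
  rw [braidB_eq_four_iff (by omega) ha, Nat.add_eq_two_iff, absExcess_eq_zero_iff ha,
    absExcess_eq_one_iff ha, absExcess_eq_two_iff ha, signRepeats_eq_zero_iff ha,
    signRepeats_eq_one_iff ha, signRepeats_eq_two_iff ha]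
  constructor
  · rintro (h4d | ⟨⟨i₀, hi₀, h₀, hunit⟩, i₁, hi₁, h₁, halt⟩ |
      ⟨⟨i₀, hi₀, h₀, hunit⟩ | ⟨i₀, hi₀, i₁, hi₁, hne, h₀, h₁, hunit⟩, halt⟩)
    · exact .inr (.inr (.inr h4d))
    · exact .inr (.inr (.inl ⟨i₀, hi₀, i₁, hi₁, h₀, hunit, h₁, halt⟩))
    · exact .inl ⟨i₀, hi₀, h₀, hunit, halt⟩
    · exact .inr (.inl ⟨i₀, hi₀, i₁, hi₁, hne, h₀, h₁, hunit, halt⟩)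
  · rintro (⟨i₀, hi₀, h₀, hunit, halt⟩ | ⟨i₀, hi₀, i₁, hi₁, hne, h₀, h₁, hunit, halt⟩ |
      ⟨i₀, hi₀, i₁, hi₁, h₀, hunit, h₁, halt⟩ | h4d)
    · exact .inr (.inr ⟨.inl ⟨i₀, hi₀, h₀, hunit⟩, halt⟩)
    · exact .inr (.inr ⟨.inr ⟨i₀, hi₀, i₁, hi₁, hne, h₀, h₁, hunit⟩, halt⟩)
    · exact .inr (.inl ⟨⟨i₀, hi₀, h₀, hunit⟩, i₁, hi₁, h₁, halt⟩)
    · exact .inl h4d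
end
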